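/- arXiv:2307.01650 — 7 statements merged into one kernel-verified Lean document; each statement's English description precedes it below -/
import Mathlib

section
/- Let H be a λ-edge-connected graph with λ odd, let A be a λ-cut and B a (λ+1)-cut that cross. Then the square of A, B has no diagonal edges, one side edge has multiplicity (λ−1)/2, and the other three side edges each have multiplicity (λ+1)/2. -/
open Finset

/-- Number of edges of the multigraph (edges indexed by `ι` with endpoint maps
`fst`, `snd`) that lie in `J` and have exactly one endpoint in `S`. -/
def cutCard {V ι : Type} [DecidableEq V] [DecidableEq ι]
    (fst snd : ι → V) (J : Finset ι) (S : Finset V) : ℕ :=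
  (J.filter (fun e => (fst e ∈ S ∧ snd e ∉ S) ∨ (snd e ∈ S ∧ fst e ∉ S))).card

/-- Number of edges in `J` with one endpoint in `X` and the other in `Y`. -/
def btw {V ι : Type} [DecidableEq V] [DecidableEq ι]
    (fst snd : ι → V) (J : Finset ι) (X Y : Finset V) : ℕ :=
  (J.filter (fun e => (fst e ∈ X ∧ snd e ∈ Y) ∨ (fst e ∈ Y ∧ snd e ∈ X))).card

lemma quad_rot (x y : ℕ) : ({y, y, y, x} : Multiset ℕ) = ({x, y, y, y} : Multiset ℕ) := by
  simp only [Multiset.insert_eq_cons, ← Multiset.cons_zero]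
  rw [Multiset.cons_swap y x, Multiset.cons_swap y x, Multiset.cons_swap y x]

theorem stmt4 {V ι : Type} [Fintype V] [DecidableEq V] [DecidableEq ι]
    (fst snd : ι → V) (J : Finset ι) (lam : ℕ) (hlam : Odd lam)
    (hconn : ∀ S : Finset V, S.Nonempty → S ≠ Finset.univ → lam ≤ cutCard fst snd J S)
    (A B : Finset V)
    (hA : cutCard fst snd J A = lam) (hB : cutCard fst snd J B = lam + 1)
    (hC1 : (A ∩ B).Nonempty) (hC2 : (A \ B).Nonempty)
    (hC3 : (Finset.univ \ (A ∪ B)).Nonempty) (hC4 : (B \ A).Nonempty) :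
    btw fst snd J (A \ B) (B \ A) = 0 ∧
    btw fst snd J (A ∩ B) (Finset.univ \ (A ∪ B)) = 0 ∧
    ({btw fst snd J (A ∩ B) (A \ B),
      btw fst snd J (A \ B) (Finset.univ \ (A ∪ B)),
      btw fst snd J (Finset.univ \ (A ∪ B)) (B \ A),
      btw fst snd J (B \ A) (A ∩ B)} : Multiset ℕ)
      = ({(lam - 1) / 2, (lam + 1) / 2, (lam + 1) / 2, (lam + 1) / 2} : Multiset ℕ) := by
  classical
  obtain ⟨k, hk⟩ := hlam
  -- the four corners are proper subsets
  have hC1u : (A ∩ B) ≠ univ := by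
    intro h
    obtain ⟨x, hx⟩ := hC2
    have hx2 : x ∈ A ∩ B := h.symm ▸ Finset.mem_univ x
    simp only [Finset.mem_inter, Finset.mem_sdiff] at hx hx2
    exact hx.2 hx2.2
  have hC2u : (A \ B) ≠ univ := by
    intro h
    obtain ⟨x, hx⟩ := hC1
    have hx2 : x ∈ A \ B := h.symm ▸ Finset.mem_univ x
    simp only [Finset.mem_inter, Finset.mem_sdiff] at hx hx2
    exact hx2.2 hx.2
  have hC3u : (univ \ (A ∪ B)) ≠ univ := by
    intro h
    obtain ⟨x, hx⟩ := hC1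
    have hx2 : x ∈ univ \ (A ∪ B) := h.symm ▸ Finset.mem_univ x
    simp only [Finset.mem_inter, Finset.mem_sdiff, Finset.mem_union] at hx hx2
    exact hx2.2 (Or.inl hx.1)
  have hC4u : (B \ A) ≠ univ := by
    intro h
    obtain ⟨x, hx⟩ := hC1
    have hx2 : x ∈ B \ A := h.symm ▸ Finset.mem_univ x
    simp only [Finset.mem_inter, Finset.mem_sdiff] at hx hx2
    exact hx2.2 hx.1
  have h1 := hconn (A ∩ B) hC1 hC1u
  have h2 := hconn (A \ B) hC2 hC2u
  have h3 := hconn (univ \ (A ∪ B)) hC3 hC3u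
  have h4 := hconn (B \ A) hC4 hC4u
  -- decompositions of cuts into corner-pair edge counts
  have e1 : cutCard fst snd J A =
      btw fst snd J (A ∩ B) (univ \ (A ∪ B)) + btw fst snd J (A \ B) (B \ A)
      + btw fst snd J (A \ B) (univ \ (A ∪ B)) + btw fst snd J (B \ A) (A ∩ B) := by
    unfold cutCard _root_.btw
    simp only [Finset.card_filter]
    rw [← Finset.sum_add_distrib, ← Finset.sum_add_distrib, ← Finset.sum_add_distrib]
    refine Finset.sum_congr rfl fun e _ => ?_
    by_cases hh1 : fst e ∈ A <;> by_cases hh2 : fst e ∈ B <;>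
      by_cases hh3 : snd e ∈ A <;> by_cases hh4 : snd e ∈ B <;>
      simp [hh1, hh2, hh3, hh4]
  have e2 : cutCard fst snd J B =
      btw fst snd J (A ∩ B) (A \ B) + btw fst snd J (A ∩ B) (univ \ (A ∪ B))
      + btw fst snd J (A \ B) (B \ A) + btw fst snd J (univ \ (A ∪ B)) (B \ A) := by
    unfold cutCard _root_.btw
    simp only [Finset.card_filter]
    rw [← Finset.sum_add_distrib, ← Finset.sum_add_distrib, ← Finset.sum_add_distrib]
    refine Finset.sum_congr rfl fun e _ => ?_
    by_cases hh1 : fst e ∈ A <;> by_cases hh2 : fst e ∈ B <;>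
      by_cases hh3 : snd e ∈ A <;> by_cases hh4 : snd e ∈ B <;>
      simp [hh1, hh2, hh3, hh4]
  have e3 : cutCard fst snd J (A ∩ B) =
      btw fst snd J (A ∩ B) (A \ B) + btw fst snd J (A ∩ B) (univ \ (A ∪ B))
      + btw fst snd J (B \ A) (A ∩ B) := by
    unfold cutCard _root_.btw
    simp only [Finset.card_filter]
    rw [← Finset.sum_add_distrib, ← Finset.sum_add_distrib]
    refine Finset.sum_congr rfl fun e _ => ?_
    by_cases hh1 : fst e ∈ A <;> by_cases hh2 : fst e ∈ B <;>
      by_cases hh3 : snd e ∈ A <;> by_cases hh4 : snd e ∈ B <;>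
      simp [hh1, hh2, hh3, hh4]
  have e4 : cutCard fst snd J (A \ B) =
      btw fst snd J (A ∩ B) (A \ B) + btw fst snd J (A \ B) (univ \ (A ∪ B))
      + btw fst snd J (A \ B) (B \ A) := by
    unfold cutCard _root_.btw
    simp only [Finset.card_filter]
    rw [← Finset.sum_add_distrib, ← Finset.sum_add_distrib]
    refine Finset.sum_congr rfl fun e _ => ?_
    by_cases hh1 : fst e ∈ A <;> by_cases hh2 : fst e ∈ B <;>
      by_cases hh3 : snd e ∈ A <;> by_cases hh4 : snd e ∈ B <;>
      simp [hh1, hh2, hh3, hh4]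
  have e5 : cutCard fst snd J (univ \ (A ∪ B)) =
      btw fst snd J (A ∩ B) (univ \ (A ∪ B)) + btw fst snd J (A \ B) (univ \ (A ∪ B))
      + btw fst snd J (univ \ (A ∪ B)) (B \ A) := by
    unfold cutCard _root_.btw
    simp only [Finset.card_filter]
    rw [← Finset.sum_add_distrib, ← Finset.sum_add_distrib]
    refine Finset.sum_congr rfl fun e _ => ?_
    by_cases hh1 : fst e ∈ A <;> by_cases hh2 : fst e ∈ B <;>
      by_cases hh3 : snd e ∈ A <;> by_cases hh4 : snd e ∈ B <;>
      simp [hh1, hh2, hh3, hh4]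
  have e6 : cutCard fst snd J (B \ A) =
      btw fst snd J (A \ B) (B \ A) + btw fst snd J (univ \ (A ∪ B)) (B \ A)
      + btw fst snd J (B \ A) (A ∩ B) := by
    unfold cutCard _root_.btw
    simp only [Finset.card_filter]
    rw [← Finset.sum_add_distrib, ← Finset.sum_add_distrib]
    refine Finset.sum_congr rfl fun e _ => ?_
    by_cases hh1 : fst e ∈ A <;> by_cases hh2 : fst e ∈ B <;>
      by_cases hh3 : snd e ∈ A <;> by_cases hh4 : snd e ∈ B <;>
      simp [hh1, hh2, hh3, hh4]
  refine ⟨by omega, by omega, ?_⟩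
  have hv1 : btw fst snd J (A ∩ B) (A \ B) = k + 1 := by omega
  have hv3 : btw fst snd J (univ \ (A ∪ B)) (B \ A) = k + 1 := by omega
  have hdiv1 : (lam - 1) / 2 = k := by omega
  have hdiv2 : (lam + 1) / 2 = k + 1 := by omega
  have hcase : (btw fst snd J (A \ B) (univ \ (A ∪ B)) = k ∧
        btw fst snd J (B \ A) (A ∩ B) = k + 1) ∨
      (btw fst snd J (A \ B) (univ \ (A ∪ B)) = k + 1 ∧
        btw fst snd J (B \ A) (A ∩ B) = k) := by omega
  rw [hdiv1, hdiv2, hv1, hv3]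
  rcases hcase with ⟨h5, h6⟩ | ⟨h5, h6⟩ <;> rw [h5, h6]
  · exact Multiset.cons_swap _ _ _
  · exact quad_rot k (k + 1)
end

section
/- Let H be a λ-edge-connected graph with λ even, let A be a λ-cut and B a (λ+1)-cut that cross. Then the square of A, B has no diagonal edges, one side edge has multiplicity λ/2 + 1, and the other three side edges each have multiplicity λ/2. -/
open Finset

lemma m4swap (k : ℕ) : ({k, k, k+1, k} : Multiset ℕ) = {k+1, k, k, k} := by
  change k ::ₘ k ::ₘ (k+1) ::ₘ {k} = (k+1) ::ₘ k ::ₘ k ::ₘ {k}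
  rw [Multiset.cons_swap k (k+1), Multiset.cons_swap k (k+1)]

theorem stmt5 {V ι : Type} [Fintype V] [DecidableEq V] [DecidableEq ι]
    (fst snd : ι → V) (J : Finset ι) (lam : ℕ) (hlam : Even lam)
    (hconn : ∀ S : Finset V, S.Nonempty → S ≠ Finset.univ → lam ≤ cutCard fst snd J S)
    (A B : Finset V)
    (hA : cutCard fst snd J A = lam) (hB : cutCard fst snd J B = lam + 1)
    (hC1 : (A ∩ B).Nonempty) (hC2 : (A \ B).Nonempty)
    (hC3 : (Finset.univ \ (A ∪ B)).Nonempty) (hC4 : (B \ A).Nonempty) :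
    btw fst snd J (A \ B) (B \ A) = 0 ∧
    btw fst snd J (A ∩ B) (Finset.univ \ (A ∪ B)) = 0 ∧
    ({btw fst snd J (A ∩ B) (A \ B),
      btw fst snd J (A \ B) (Finset.univ \ (A ∪ B)),
      btw fst snd J (Finset.univ \ (A ∪ B)) (B \ A),
      btw fst snd J (B \ A) (A ∩ B)} : Multiset ℕ)
      = ({lam / 2 + 1, lam / 2, lam / 2, lam / 2} : Multiset ℕ) := by
  have eA : cutCard fst snd J A = btw fst snd J (A ∩ B) (Finset.univ \ (A ∪ B)) + btw fst snd J (A ∩ B) (B \ A) + btw fst snd J (A \ B) (Finset.univ \ (A ∪ B)) + btw fst snd J (A \ B) (B \ A) := by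
    simp only [cutCard, _root_.btw, Finset.card_filter]
    rw [← Finset.sum_add_distrib, ← Finset.sum_add_distrib, ← Finset.sum_add_distrib]
    refine Finset.sum_congr rfl fun e _ => ?_
    simp only [mem_inter, mem_sdiff, mem_union, mem_univ, true_and]
    by_cases h1 : fst e ∈ A <;> by_cases h2 : fst e ∈ B <;>
      by_cases h3 : snd e ∈ A <;> by_cases h4 : snd e ∈ B <;> simp [h1, h2, h3, h4]
  have eB : cutCard fst snd J B = btw fst snd J (A ∩ B) (A \ B) + btw fst snd J (A ∩ B) (Finset.univ \ (A ∪ B)) + btw fst snd J (A \ B) (B \ A) + btw fst snd J (Finset.univ \ (A ∪ B)) (B \ A) := by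
    simp only [cutCard, _root_.btw, Finset.card_filter]
    rw [← Finset.sum_add_distrib, ← Finset.sum_add_distrib, ← Finset.sum_add_distrib]
    refine Finset.sum_congr rfl fun e _ => ?_
    simp only [mem_inter, mem_sdiff, mem_union, mem_univ, true_and]
    by_cases h1 : fst e ∈ A <;> by_cases h2 : fst e ∈ B <;>
      by_cases h3 : snd e ∈ A <;> by_cases h4 : snd e ∈ B <;> simp [h1, h2, h3, h4]
  have e1 : cutCard fst snd J (A ∩ B) = btw fst snd J (A ∩ B) (A \ B) + btw fst snd J (A ∩ B) (Finset.univ \ (A ∪ B)) + btw fst snd J (A ∩ B) (B \ A) := by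
    simp only [cutCard, _root_.btw, Finset.card_filter]
    rw [← Finset.sum_add_distrib, ← Finset.sum_add_distrib]
    refine Finset.sum_congr rfl fun e _ => ?_
    simp only [mem_inter, mem_sdiff, mem_union, mem_univ, true_and]
    by_cases h1 : fst e ∈ A <;> by_cases h2 : fst e ∈ B <;>
      by_cases h3 : snd e ∈ A <;> by_cases h4 : snd e ∈ B <;> simp [h1, h2, h3, h4]
  have e2 : cutCard fst snd J (A \ B) = btw fst snd J (A ∩ B) (A \ B) + btw fst snd J (A \ B) (Finset.univ \ (A ∪ B)) + btw fst snd J (A \ B) (B \ A) := by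
    simp only [cutCard, _root_.btw, Finset.card_filter]
    rw [← Finset.sum_add_distrib, ← Finset.sum_add_distrib]
    refine Finset.sum_congr rfl fun e _ => ?_
    simp only [mem_inter, mem_sdiff, mem_union, mem_univ, true_and]
    by_cases h1 : fst e ∈ A <;> by_cases h2 : fst e ∈ B <;>
      by_cases h3 : snd e ∈ A <;> by_cases h4 : snd e ∈ B <;> simp [h1, h2, h3, h4]
  have e3 : cutCard fst snd J (Finset.univ \ (A ∪ B)) = btw fst snd J (A ∩ B) (Finset.univ \ (A ∪ B)) + btw fst snd J (A \ B) (Finset.univ \ (A ∪ B)) + btw fst snd J (Finset.univ \ (A ∪ B)) (B \ A) := by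
    simp only [cutCard, _root_.btw, Finset.card_filter]
    rw [← Finset.sum_add_distrib, ← Finset.sum_add_distrib]
    refine Finset.sum_congr rfl fun e _ => ?_
    simp only [mem_inter, mem_sdiff, mem_union, mem_univ, true_and]
    by_cases h1 : fst e ∈ A <;> by_cases h2 : fst e ∈ B <;>
      by_cases h3 : snd e ∈ A <;> by_cases h4 : snd e ∈ B <;> simp [h1, h2, h3, h4]
  have e4 : cutCard fst snd J (B \ A) = btw fst snd J (A ∩ B) (B \ A) + btw fst snd J (A \ B) (B \ A) + btw fst snd J (Finset.univ \ (A ∪ B)) (B \ A) := by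
    simp only [cutCard, _root_.btw, Finset.card_filter]
    rw [← Finset.sum_add_distrib, ← Finset.sum_add_distrib]
    refine Finset.sum_congr rfl fun e _ => ?_
    simp only [mem_inter, mem_sdiff, mem_union, mem_univ, true_and]
    by_cases h1 : fst e ∈ A <;> by_cases h2 : fst e ∈ B <;>
      by_cases h3 : snd e ∈ A <;> by_cases h4 : snd e ∈ B <;> simp [h1, h2, h3, h4]
  have n1 : (A ∩ B) ≠ Finset.univ := by
    intro h; obtain ⟨v, hv⟩ := hC3
    have hv' : v ∈ A ∩ B := by rw [h]; exact mem_univ v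
    simp only [mem_inter, mem_sdiff, mem_union, mem_univ, true_and] at hv hv'
    tauto
  have n2 : (A \ B) ≠ Finset.univ := by
    intro h; obtain ⟨v, hv⟩ := hC4
    have hv' : v ∈ A \ B := by rw [h]; exact mem_univ v
    simp only [mem_sdiff] at hv hv'
    tauto
  have n3 : (Finset.univ \ (A ∪ B)) ≠ Finset.univ := by
    intro h; obtain ⟨v, hv⟩ := hC1
    have hv' : v ∈ Finset.univ \ (A ∪ B) := by rw [h]; exact mem_univ v
    simp only [mem_inter, mem_sdiff, mem_union, mem_univ, true_and] at hv hv'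
    tauto
  have n4 : (B \ A) ≠ Finset.univ := by
    intro h; obtain ⟨v, hv⟩ := hC2
    have hv' : v ∈ B \ A := by rw [h]; exact mem_univ v
    simp only [mem_sdiff] at hv hv'
    tauto
  have h1 := hconn _ hC1 n1
  have h2 := hconn _ hC2 n2
  have h3 := hconn _ hC3 n3
  have h4 := hconn _ hC4 n4
  rw [e1] at h1; rw [e2] at h2; rw [e3] at h3; rw [e4] at h4
  rw [eA] at hA; rw [eB] at hB
  obtain ⟨x12, hx12⟩ : ∃ n, btw fst snd J (A ∩ B) (A \ B) = n := ⟨_, rfl⟩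
  obtain ⟨x13, hx13⟩ : ∃ n, btw fst snd J (A ∩ B) (Finset.univ \ (A ∪ B)) = n := ⟨_, rfl⟩
  obtain ⟨x14, hx14⟩ : ∃ n, btw fst snd J (A ∩ B) (B \ A) = n := ⟨_, rfl⟩
  obtain ⟨x23, hx23⟩ : ∃ n, btw fst snd J (A \ B) (Finset.univ \ (A ∪ B)) = n := ⟨_, rfl⟩
  obtain ⟨x24, hx24⟩ : ∃ n, btw fst snd J (A \ B) (B \ A) = n := ⟨_, rfl⟩
  obtain ⟨x34, hx34⟩ : ∃ n, btw fst snd J (Finset.univ \ (A ∪ B)) (B \ A) = n := ⟨_, rfl⟩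
  rw [hx13, hx14, hx23, hx24] at hA
  rw [hx12, hx13, hx24, hx34] at hB
  rw [hx12, hx13, hx14] at h1
  rw [hx12, hx23, hx24] at h2
  rw [hx13, hx23, hx34] at h3
  rw [hx14, hx24, hx34] at h4
  obtain ⟨k, hk⟩ := hlam
  have hd : x24 = 0 ∧ x13 = 0 ∧ x23 = k ∧ x14 = k ∧
      ((x12 = k + 1 ∧ x34 = k) ∨ (x12 = k ∧ x34 = k + 1)) := by omega
  obtain ⟨d24, d13, d23, d14, hcase⟩ := hd
  have hsym : btw fst snd J (B \ A) (A ∩ B) = btw fst snd J (A ∩ B) (B \ A) := by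
    simp only [_root_.btw]
    congr 1
    apply Finset.filter_congr
    intro e _
    constructor <;> tauto
  refine ⟨hx24.trans d24, hx13.trans d13, ?_⟩
  have hk2 : lam / 2 = k := by omega
  rw [hsym, hx12, hx23, hx34, hx14, hk2, d23, d14]
  rcases hcase with ⟨hx, hz⟩ | ⟨hx, hz⟩
  · rw [hx, hz]
  · rw [hx, hz]; exact m4swap k
end

section
/- Let H be a λ-edge-connected graph with λ even, and let A, B be crossing (λ+1)-cuts. Then exactly one of the following holds: (a) the square of A, B has no diagonal edges, two adjacent side edges have multiplicity λ/2 and the other two have multiplicity λ/2 + 1; or (b) the square has exactly one diagonal edge (of multiplicity 1) and all four side edges have multiplicity λ/2. -/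
open Finset

lemma cut_decomp3 {V ι : Type} [DecidableEq V] [DecidableEq ι]
    (fst snd : ι → V) (J : Finset ι) (S X1 Y1 X2 Y2 X3 Y3 : Finset V)
    (h : ∀ u v : V,
      (if ((u ∈ S ∧ v ∉ S) ∨ (v ∈ S ∧ u ∉ S)) then (1:ℕ) else 0) =
      (if ((u ∈ X1 ∧ v ∈ Y1) ∨ (u ∈ Y1 ∧ v ∈ X1)) then 1 else 0) +
      (if ((u ∈ X2 ∧ v ∈ Y2) ∨ (u ∈ Y2 ∧ v ∈ X2)) then 1 else 0) +
      (if ((u ∈ X3 ∧ v ∈ Y3) ∨ (u ∈ Y3 ∧ v ∈ X3)) then 1 else 0)) :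
    cutCard fst snd J S = _root_.btw fst snd J X1 Y1 + _root_.btw fst snd J X2 Y2 + _root_.btw fst snd J X3 Y3 := by
  classical
  unfold cutCard _root_.btw
  rw [Finset.card_filter, Finset.card_filter, Finset.card_filter, Finset.card_filter,
    ← Finset.sum_add_distrib, ← Finset.sum_add_distrib]
  exact Finset.sum_congr rfl (fun e _ => h (fst e) (snd e))

lemma cut_decomp4 {V ι : Type} [DecidableEq V] [DecidableEq ι]
    (fst snd : ι → V) (J : Finset ι) (S X1 Y1 X2 Y2 X3 Y3 X4 Y4 : Finset V)
    (h : ∀ u v : V,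
      (if ((u ∈ S ∧ v ∉ S) ∨ (v ∈ S ∧ u ∉ S)) then (1:ℕ) else 0) =
      (if ((u ∈ X1 ∧ v ∈ Y1) ∨ (u ∈ Y1 ∧ v ∈ X1)) then 1 else 0) +
      (if ((u ∈ X2 ∧ v ∈ Y2) ∨ (u ∈ Y2 ∧ v ∈ X2)) then 1 else 0) +
      (if ((u ∈ X3 ∧ v ∈ Y3) ∨ (u ∈ Y3 ∧ v ∈ X3)) then 1 else 0) +
      (if ((u ∈ X4 ∧ v ∈ Y4) ∨ (u ∈ Y4 ∧ v ∈ X4)) then 1 else 0)) :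
    cutCard fst snd J S = _root_.btw fst snd J X1 Y1 + _root_.btw fst snd J X2 Y2
      + _root_.btw fst snd J X3 Y3 + _root_.btw fst snd J X4 Y4 := by
  classical
  unfold cutCard _root_.btw
  rw [Finset.card_filter, Finset.card_filter, Finset.card_filter, Finset.card_filter,
    Finset.card_filter, ← Finset.sum_add_distrib, ← Finset.sum_add_distrib,
    ← Finset.sum_add_distrib]
  exact Finset.sum_congr rfl (fun e _ => h (fst e) (snd e))

set_option maxHeartbeats 800000 in
theorem stmt6 {V ι : Type} [Fintype V] [DecidableEq V] [DecidableEq ι]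
    (fst snd : ι → V) (J : Finset ι) (lam : ℕ) (hlam : Even lam)
    (hconn : ∀ S : Finset V, S.Nonempty → S ≠ Finset.univ → lam ≤ cutCard fst snd J S)
    (A B : Finset V)
    (hA : cutCard fst snd J A = lam + 1) (hB : cutCard fst snd J B = lam + 1)
    (hC1 : (A ∩ B).Nonempty) (hC2 : (A \ B).Nonempty)
    (hC3 : (Finset.univ \ (A ∪ B)).Nonempty) (hC4 : (B \ A).Nonempty)
    -- side multiplicities (in cyclic order C1C2, C2C3, C3C4, C4C1)
    (s12 s23 s34 s41 a b : ℕ)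
    (hs12 : s12 = btw fst snd J (A ∩ B) (A \ B))
    (hs23 : s23 = btw fst snd J (A \ B) (Finset.univ \ (A ∪ B)))
    (hs34 : s34 = btw fst snd J (Finset.univ \ (A ∪ B)) (B \ A))
    (hs41 : s41 = btw fst snd J (B \ A) (A ∩ B))
    -- diagonal multiplicities C2C4 and C1C3
    (ha : a = btw fst snd J (A \ B) (B \ A))
    (hb : b = btw fst snd J (A ∩ B) (Finset.univ \ (A ∪ B))) :
    Xor'
      -- (a) no diagonal edges, two adjacent side edges have multiplicity lam/2,
      -- the other two have multiplicity lam/2 + 1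
      (a = 0 ∧ b = 0 ∧
        ((s12 = lam / 2 ∧ s23 = lam / 2 ∧ s34 = lam / 2 + 1 ∧ s41 = lam / 2 + 1) ∨
         (s23 = lam / 2 ∧ s34 = lam / 2 ∧ s41 = lam / 2 + 1 ∧ s12 = lam / 2 + 1) ∨
         (s34 = lam / 2 ∧ s41 = lam / 2 ∧ s12 = lam / 2 + 1 ∧ s23 = lam / 2 + 1) ∨
         (s41 = lam / 2 ∧ s12 = lam / 2 ∧ s23 = lam / 2 + 1 ∧ s34 = lam / 2 + 1)))
      -- (b) exactly one diagonal edge of multiplicity 1, all side edges lam/2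
      (((a = 1 ∧ b = 0) ∨ (a = 0 ∧ b = 1)) ∧
        s12 = lam / 2 ∧ s23 = lam / 2 ∧ s34 = lam / 2 ∧ s41 = lam / 2) := by
  classical
  -- cut of A
  have eA : cutCard fst snd J A = s23 + s41 + (a + b) := by
    rw [hs23, hs41, ha, hb]
    have := cut_decomp4 fst snd J A (A \ B) (Finset.univ \ (A ∪ B)) (B \ A) (A ∩ B)
      (A \ B) (B \ A) (A ∩ B) (Finset.univ \ (A ∪ B)) (fun u v => by
        by_cases h1 : u ∈ A <;> by_cases h2 : u ∈ B <;>
          by_cases h3 : v ∈ A <;> by_cases h4 : v ∈ B <;>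
          simp [h1, h2, h3, h4])
    omega
  have eB : cutCard fst snd J B = s12 + s34 + (a + b) := by
    rw [hs12, hs34, ha, hb]
    have := cut_decomp4 fst snd J B (A ∩ B) (A \ B) (Finset.univ \ (A ∪ B)) (B \ A)
      (A \ B) (B \ A) (A ∩ B) (Finset.univ \ (A ∪ B)) (fun u v => by
        by_cases h1 : u ∈ A <;> by_cases h2 : u ∈ B <;>
          by_cases h3 : v ∈ A <;> by_cases h4 : v ∈ B <;>
          simp [h1, h2, h3, h4])
    omega
  have e1 : cutCard fst snd J (A ∩ B) = s12 + s41 + b := by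
    rw [hs12, hs41, hb]
    have := cut_decomp3 fst snd J (A ∩ B) (A ∩ B) (A \ B) (B \ A) (A ∩ B)
      (A ∩ B) (Finset.univ \ (A ∪ B)) (fun u v => by
        by_cases h1 : u ∈ A <;> by_cases h2 : u ∈ B <;>
          by_cases h3 : v ∈ A <;> by_cases h4 : v ∈ B <;>
          simp [h1, h2, h3, h4])
    omega
  have e2 : cutCard fst snd J (A \ B) = s12 + s23 + a := by
    rw [hs12, hs23, ha]
    have := cut_decomp3 fst snd J (A \ B) (A ∩ B) (A \ B) (A \ B) (Finset.univ \ (A ∪ B))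
      (A \ B) (B \ A) (fun u v => by
        by_cases h1 : u ∈ A <;> by_cases h2 : u ∈ B <;>
          by_cases h3 : v ∈ A <;> by_cases h4 : v ∈ B <;>
          simp [h1, h2, h3, h4])
    omega
  have e3 : cutCard fst snd J (Finset.univ \ (A ∪ B)) = s23 + s34 + b := by
    rw [hs23, hs34, hb]
    have := cut_decomp3 fst snd J (Finset.univ \ (A ∪ B))
      (A \ B) (Finset.univ \ (A ∪ B)) (Finset.univ \ (A ∪ B)) (B \ A)
      (A ∩ B) (Finset.univ \ (A ∪ B)) (fun u v => by
        by_cases h1 : u ∈ A <;> by_cases h2 : u ∈ B <;>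
          by_cases h3 : v ∈ A <;> by_cases h4 : v ∈ B <;>
          simp [h1, h2, h3, h4])
    omega
  have e4 : cutCard fst snd J (B \ A) = s34 + s41 + a := by
    rw [hs34, hs41, ha]
    have := cut_decomp3 fst snd J (B \ A) (Finset.univ \ (A ∪ B)) (B \ A)
      (B \ A) (A ∩ B) (A \ B) (B \ A) (fun u v => by
        by_cases h1 : u ∈ A <;> by_cases h2 : u ∈ B <;>
          by_cases h3 : v ∈ A <;> by_cases h4 : v ∈ B <;>
          simp [h1, h2, h3, h4])
    omega
  -- the corner sets are proper
  obtain ⟨w1, hw1⟩ := hC1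
  obtain ⟨w2, hw2⟩ := hC2
  obtain ⟨w3, hw3⟩ := hC3
  obtain ⟨w4, hw4⟩ := hC4
  rw [Finset.mem_inter] at hw1
  rw [Finset.mem_sdiff] at hw2 hw4
  rw [Finset.mem_sdiff, Finset.mem_union] at hw3
  have n1 : A ∩ B ≠ Finset.univ := by
    intro h
    have : w3 ∈ A ∩ B := by rw [h]; exact Finset.mem_univ w3
    rw [Finset.mem_inter] at this
    exact hw3.2 (Or.inl this.1)
  have n2 : A \ B ≠ Finset.univ := by
    intro h
    have : w1 ∈ A \ B := by rw [h]; exact Finset.mem_univ w1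
    rw [Finset.mem_sdiff] at this
    exact this.2 hw1.2
  have n3 : Finset.univ \ (A ∪ B) ≠ Finset.univ := by
    intro h
    have : w1 ∈ Finset.univ \ (A ∪ B) := by rw [h]; exact Finset.mem_univ w1
    rw [Finset.mem_sdiff, Finset.mem_union] at this
    exact this.2 (Or.inl hw1.1)
  have n4 : B \ A ≠ Finset.univ := by
    intro h
    have : w1 ∈ B \ A := by rw [h]; exact Finset.mem_univ w1
    rw [Finset.mem_sdiff] at this
    exact this.2 hw1.1
  have i1 := hconn (A ∩ B) ⟨w1, Finset.mem_inter.mpr hw1⟩ n1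
  have i2 := hconn (A \ B) ⟨w2, Finset.mem_sdiff.mpr hw2⟩ n2
  have i3 := hconn (Finset.univ \ (A ∪ B))
    ⟨w3, by rw [Finset.mem_sdiff, Finset.mem_union]; exact hw3⟩ n3
  have i4 := hconn (B \ A) ⟨w4, Finset.mem_sdiff.mpr hw4⟩ n4
  rw [Nat.even_iff] at hlam
  obtain ⟨k, hk⟩ : ∃ k, lam = 2 * k := ⟨lam / 2, by omega⟩
  have hdiv : lam / 2 = k := by omega
  rw [hdiv]
  subst hk
  have hab : (a = 0 ∧ b = 0) ∨ (a = 1 ∧ b = 0) ∨ (a = 0 ∧ b = 1) := by omega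
  rcases hab with ⟨ha0, hb0⟩ | ⟨ha1, hb0⟩ | ⟨ha0, hb1⟩
  · subst ha0; subst hb0
    left
    refine ⟨⟨rfl, rfl, ?_⟩, ?_⟩
    · have h5 : s12 + s41 = 2 * k ∨ s12 + s41 = 2 * k + 1 ∨ s12 + s41 = 2 * k + 2 := by
        omega
      rcases h5 with h5 | h5 | h5
      · exact Or.inr (Or.inr (Or.inr ⟨by omega, by omega, by omega, by omega⟩))
      · have h6 : s12 = k ∨ s12 = k + 1 := by omega
        rcases h6 with h6 | h6
        · exact Or.inl ⟨by omega, by omega, by omega, by omega⟩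
        · exact Or.inr (Or.inr (Or.inl ⟨by omega, by omega, by omega, by omega⟩))
      · exact Or.inr (Or.inl ⟨by omega, by omega, by omega, by omega⟩)
    · rintro ⟨h | h, -⟩ <;> omega
  · subst ha1; subst hb0
    right
    refine ⟨⟨Or.inl ⟨rfl, rfl⟩, by omega, by omega, by omega, by omega⟩, ?_⟩
    rintro ⟨h, -⟩; omega
  · subst ha0; subst hb1
    right
    refine ⟨⟨Or.inr ⟨rfl, rfl⟩, by omega, by omega, by omega, by omega⟩, ?_⟩
    rintro ⟨-, h, -⟩; omega
end

section
/- Let H be a λ-edge-connected graph with λ odd, and let A, B be crossing (λ+1)-cuts. Then one of the following holds: (c) no diagonals, two opposite side edges have multiplicity (λ+1)/2, one side edge has multiplicity (λ+3)/2, and its opposite has (λ−1)/2; (d) exactly one diagonal edge, the two side edges incident to one end of the diagonal have multiplicity (λ−1)/2 and the other two have (λ+1)/2; (e) both diagonal edges present with multiplicity 1 each and all four side edges have multiplicity (λ−1)/2; or (f) no diagonal edges and all four side edges have multiplicity (λ+1)/2. -/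
open Finset

section Aux
variable {V ι : Type} [Fintype V] [DecidableEq V] [DecidableEq ι]
  (fst snd : ι → V) (J : Finset ι) (A B : Finset V)

private lemma decompA :
    cutCard fst snd J A =
      _root_.btw fst snd J (A \ B) (univ \ (A ∪ B)) + _root_.btw fst snd J (B \ A) (A ∩ B)
        + _root_.btw fst snd J (A \ B) (B \ A) + _root_.btw fst snd J (A ∩ B) (univ \ (A ∪ B)) := by
  simp only [cutCard, _root_.btw, Finset.card_filter, ← Finset.sum_add_distrib]
  refine Finset.sum_congr rfl fun e _ => ?_
  by_cases h1 : fst e ∈ A <;> by_cases h2 : fst e ∈ B <;>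
    by_cases h3 : snd e ∈ A <;> by_cases h4 : snd e ∈ B <;> simp [h1, h2, h3, h4]

private lemma decompB :
    cutCard fst snd J B =
      _root_.btw fst snd J (A ∩ B) (A \ B) + _root_.btw fst snd J (univ \ (A ∪ B)) (B \ A)
        + _root_.btw fst snd J (A \ B) (B \ A) + _root_.btw fst snd J (A ∩ B) (univ \ (A ∪ B)) := by
  simp only [cutCard, _root_.btw, Finset.card_filter, ← Finset.sum_add_distrib]
  refine Finset.sum_congr rfl fun e _ => ?_
  by_cases h1 : fst e ∈ A <;> by_cases h2 : fst e ∈ B <;>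
    by_cases h3 : snd e ∈ A <;> by_cases h4 : snd e ∈ B <;> simp [h1, h2, h3, h4]

private lemma decomp1 :
    cutCard fst snd J (A ∩ B) =
      _root_.btw fst snd J (A ∩ B) (A \ B) + _root_.btw fst snd J (B \ A) (A ∩ B)
        + _root_.btw fst snd J (A ∩ B) (univ \ (A ∪ B)) := by
  simp only [cutCard, _root_.btw, Finset.card_filter, ← Finset.sum_add_distrib]
  refine Finset.sum_congr rfl fun e _ => ?_
  by_cases h1 : fst e ∈ A <;> by_cases h2 : fst e ∈ B <;>
    by_cases h3 : snd e ∈ A <;> by_cases h4 : snd e ∈ B <;> simp [h1, h2, h3, h4]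

private lemma decomp2 :
    cutCard fst snd J (A \ B) =
      _root_.btw fst snd J (A ∩ B) (A \ B) + _root_.btw fst snd J (A \ B) (univ \ (A ∪ B))
        + _root_.btw fst snd J (A \ B) (B \ A) := by
  simp only [cutCard, _root_.btw, Finset.card_filter, ← Finset.sum_add_distrib]
  refine Finset.sum_congr rfl fun e _ => ?_
  by_cases h1 : fst e ∈ A <;> by_cases h2 : fst e ∈ B <;>
    by_cases h3 : snd e ∈ A <;> by_cases h4 : snd e ∈ B <;> simp [h1, h2, h3, h4]

private lemma decomp3 :
    cutCard fst snd J (univ \ (A ∪ B)) =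
      _root_.btw fst snd J (A \ B) (univ \ (A ∪ B)) + _root_.btw fst snd J (univ \ (A ∪ B)) (B \ A)
        + _root_.btw fst snd J (A ∩ B) (univ \ (A ∪ B)) := by
  simp only [cutCard, _root_.btw, Finset.card_filter, ← Finset.sum_add_distrib]
  refine Finset.sum_congr rfl fun e _ => ?_
  by_cases h1 : fst e ∈ A <;> by_cases h2 : fst e ∈ B <;>
    by_cases h3 : snd e ∈ A <;> by_cases h4 : snd e ∈ B <;> simp [h1, h2, h3, h4]

private lemma decomp4 :
    cutCard fst snd J (B \ A) =
      _root_.btw fst snd J (univ \ (A ∪ B)) (B \ A) + _root_.btw fst snd J (B \ A) (A ∩ B)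
        + _root_.btw fst snd J (A \ B) (B \ A) := by
  simp only [cutCard, _root_.btw, Finset.card_filter, ← Finset.sum_add_distrib]
  refine Finset.sum_congr rfl fun e _ => ?_
  by_cases h1 : fst e ∈ A <;> by_cases h2 : fst e ∈ B <;>
    by_cases h3 : snd e ∈ A <;> by_cases h4 : snd e ∈ B <;> simp [h1, h2, h3, h4]

end Aux

set_option maxHeartbeats 1000000 in
private lemma stmt7_arith (lam k s12 s23 s34 s41 a b : ℕ) (hk : lam = 2 * k + 1)
    (hA : s23 + s41 + a + b = lam + 1) (hB : s12 + s34 + a + b = lam + 1)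
    (g1 : lam ≤ s12 + s41 + b) (g2 : lam ≤ s12 + s23 + a)
    (g3 : lam ≤ s23 + s34 + b) (g4 : lam ≤ s34 + s41 + a) :
    (a = 0 ∧ b = 0 ∧
      ((s12 = (lam + 1) / 2 ∧ s34 = (lam + 1) / 2 ∧
        ({s23, s41} : Multiset ℕ) = ({(lam + 3) / 2, (lam - 1) / 2} : Multiset ℕ)) ∨
       (s23 = (lam + 1) / 2 ∧ s41 = (lam + 1) / 2 ∧
        ({s12, s34} : Multiset ℕ) = ({(lam + 3) / 2, (lam - 1) / 2} : Multiset ℕ)))) ∨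
    ((a = 1 ∧ b = 0 ∧
      ((s12 = (lam - 1) / 2 ∧ s23 = (lam - 1) / 2 ∧ s34 = (lam + 1) / 2 ∧ s41 = (lam + 1) / 2) ∨
       (s34 = (lam - 1) / 2 ∧ s41 = (lam - 1) / 2 ∧ s12 = (lam + 1) / 2 ∧ s23 = (lam + 1) / 2))) ∨
     (b = 1 ∧ a = 0 ∧
      ((s12 = (lam - 1) / 2 ∧ s41 = (lam - 1) / 2 ∧ s23 = (lam + 1) / 2 ∧ s34 = (lam + 1) / 2) ∨
       (s23 = (lam - 1) / 2 ∧ s34 = (lam - 1) / 2 ∧ s12 = (lam + 1) / 2 ∧ s41 = (lam + 1) / 2)))) ∨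
    (a = 1 ∧ b = 1 ∧
      s12 = (lam - 1) / 2 ∧ s23 = (lam - 1) / 2 ∧ s34 = (lam - 1) / 2 ∧ s41 = (lam - 1) / 2) ∨
    (a = 0 ∧ b = 0 ∧
      s12 = (lam + 1) / 2 ∧ s23 = (lam + 1) / 2 ∧ s34 = (lam + 1) / 2 ∧ s41 = (lam + 1) / 2) := by
  have hdiv1 : (lam + 1) / 2 = k + 1 := by omega
  have hdiv2 : (lam - 1) / 2 = k := by omega
  have hdiv3 : (lam + 3) / 2 = k + 2 := by omega
  rw [hdiv1, hdiv2, hdiv3]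
  have hab : (a = 0 ∧ b = 0) ∨ (a = 1 ∧ b = 0) ∨ (a = 0 ∧ b = 1) ∨ (a = 1 ∧ b = 1) := by
    omega
  rcases hab with ⟨ha0, hb0⟩ | ⟨ha0, hb0⟩ | ⟨ha0, hb0⟩ | ⟨ha0, hb0⟩ <;> subst ha0 hb0
  · have key : (s12 = k + 1 ∧ s23 = k + 1 ∧ s34 = k + 1 ∧ s41 = k + 1) ∨
        (s12 = k + 2 ∧ s34 = k ∧ s23 = k + 1 ∧ s41 = k + 1) ∨
        (s12 = k ∧ s34 = k + 2 ∧ s23 = k + 1 ∧ s41 = k + 1) ∨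
        (s23 = k + 2 ∧ s41 = k ∧ s12 = k + 1 ∧ s34 = k + 1) ∨
        (s23 = k ∧ s41 = k + 2 ∧ s12 = k + 1 ∧ s34 = k + 1) := by
      omega
    rcases key with ⟨h3, h4, h5, h6⟩ | ⟨h3, h4, h5, h6⟩ | ⟨h3, h4, h5, h6⟩ |
      ⟨h3, h4, h5, h6⟩ | ⟨h3, h4, h5, h6⟩
    · exact Or.inr (Or.inr (Or.inr ⟨rfl, rfl, h3, h4, h5, h6⟩))
    · exact Or.inl ⟨rfl, rfl, Or.inr ⟨h5, h6, by rw [h3, h4]⟩⟩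
    · exact Or.inl ⟨rfl, rfl, Or.inr ⟨h5, h6, by rw [h3, h4]; exact Multiset.cons_swap _ _ _⟩⟩
    · exact Or.inl ⟨rfl, rfl, Or.inl ⟨h5, h6, by rw [h3, h4]⟩⟩
    · exact Or.inl ⟨rfl, rfl, Or.inl ⟨h5, h6, by rw [h3, h4]; exact Multiset.cons_swap _ _ _⟩⟩
  · have key : (s12 = k ∧ s23 = k ∧ s34 = k + 1 ∧ s41 = k + 1) ∨
        (s34 = k ∧ s41 = k ∧ s12 = k + 1 ∧ s23 = k + 1) := by omega
    exact Or.inr (Or.inl (Or.inl ⟨rfl, rfl, key⟩))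
  · have key : (s12 = k ∧ s41 = k ∧ s23 = k + 1 ∧ s34 = k + 1) ∨
        (s23 = k ∧ s34 = k ∧ s12 = k + 1 ∧ s41 = k + 1) := by omega
    exact Or.inr (Or.inl (Or.inr ⟨rfl, rfl, key⟩))
  · have key : s12 = k ∧ s23 = k ∧ s34 = k ∧ s41 = k := by omega
    exact Or.inr (Or.inr (Or.inl ⟨rfl, rfl, key.1, key.2.1, key.2.2.1, key.2.2.2⟩))

theorem stmt7 {V ι : Type} [Fintype V] [DecidableEq V] [DecidableEq ι]
    (fst snd : ι → V) (J : Finset ι) (lam : ℕ) (hlam : Odd lam)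
    (hconn : ∀ S : Finset V, S.Nonempty → S ≠ Finset.univ → lam ≤ cutCard fst snd J S)
    (A B : Finset V)
    (hA : cutCard fst snd J A = lam + 1) (hB : cutCard fst snd J B = lam + 1)
    (hC1 : (A ∩ B).Nonempty) (hC2 : (A \ B).Nonempty)
    (hC3 : (Finset.univ \ (A ∪ B)).Nonempty) (hC4 : (B \ A).Nonempty)
    (s12 s23 s34 s41 a b : ℕ)
    (hs12 : s12 = btw fst snd J (A ∩ B) (A \ B))
    (hs23 : s23 = btw fst snd J (A \ B) (Finset.univ \ (A ∪ B)))
    (hs34 : s34 = btw fst snd J (Finset.univ \ (A ∪ B)) (B \ A))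
    (hs41 : s41 = btw fst snd J (B \ A) (A ∩ B))
    (ha : a = btw fst snd J (A \ B) (B \ A))
    (hb : b = btw fst snd J (A ∩ B) (Finset.univ \ (A ∪ B))) :
    -- (c) no diagonals; two opposite sides (lam+1)/2, one side (lam+3)/2 and its opposite (lam-1)/2
    (a = 0 ∧ b = 0 ∧
      ((s12 = (lam + 1) / 2 ∧ s34 = (lam + 1) / 2 ∧
        ({s23, s41} : Multiset ℕ) = ({(lam + 3) / 2, (lam - 1) / 2} : Multiset ℕ)) ∨
       (s23 = (lam + 1) / 2 ∧ s41 = (lam + 1) / 2 ∧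
        ({s12, s34} : Multiset ℕ) = ({(lam + 3) / 2, (lam - 1) / 2} : Multiset ℕ)))) ∨
    -- (d) exactly one diagonal edge; the two sides incident to one of its ends have
    -- multiplicity (lam-1)/2, the other two (lam+1)/2
    ((a = 1 ∧ b = 0 ∧
      ((s12 = (lam - 1) / 2 ∧ s23 = (lam - 1) / 2 ∧ s34 = (lam + 1) / 2 ∧ s41 = (lam + 1) / 2) ∨
       (s34 = (lam - 1) / 2 ∧ s41 = (lam - 1) / 2 ∧ s12 = (lam + 1) / 2 ∧ s23 = (lam + 1) / 2))) ∨
     (b = 1 ∧ a = 0 ∧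
      ((s12 = (lam - 1) / 2 ∧ s41 = (lam - 1) / 2 ∧ s23 = (lam + 1) / 2 ∧ s34 = (lam + 1) / 2) ∨
       (s23 = (lam - 1) / 2 ∧ s34 = (lam - 1) / 2 ∧ s12 = (lam + 1) / 2 ∧ s41 = (lam + 1) / 2)))) ∨
    -- (e) both diagonals of multiplicity 1, all sides (lam-1)/2
    (a = 1 ∧ b = 1 ∧
      s12 = (lam - 1) / 2 ∧ s23 = (lam - 1) / 2 ∧ s34 = (lam - 1) / 2 ∧ s41 = (lam - 1) / 2) ∨
    -- (f) no diagonals, all sides (lam+1)/2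
    (a = 0 ∧ b = 0 ∧
      s12 = (lam + 1) / 2 ∧ s23 = (lam + 1) / 2 ∧ s34 = (lam + 1) / 2 ∧ s41 = (lam + 1) / 2) := by
  have hne1 : A ∩ B ≠ Finset.univ := by
    intro h
    obtain ⟨x, hx⟩ := hC3
    rw [Finset.mem_sdiff] at hx
    have hx1 : x ∈ A ∩ B := by rw [h]; exact Finset.mem_univ x
    rw [Finset.mem_inter] at hx1
    exact hx.2 (Finset.mem_union_left _ hx1.1)
  have hne2 : A \ B ≠ Finset.univ := by
    intro h
    obtain ⟨x, hx⟩ := hC4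
    rw [Finset.mem_sdiff] at hx
    have hx1 : x ∈ A \ B := by rw [h]; exact Finset.mem_univ x
    rw [Finset.mem_sdiff] at hx1
    exact hx.2 hx1.1
  have hne3 : Finset.univ \ (A ∪ B) ≠ Finset.univ := by
    intro h
    obtain ⟨x, hx⟩ := hC1
    rw [Finset.mem_inter] at hx
    have hx1 : x ∈ Finset.univ \ (A ∪ B) := by rw [h]; exact Finset.mem_univ x
    rw [Finset.mem_sdiff] at hx1
    exact hx1.2 (Finset.mem_union_left _ hx.1)
  have hne4 : B \ A ≠ Finset.univ := by
    intro h
    obtain ⟨x, hx⟩ := hC2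
    rw [Finset.mem_sdiff] at hx
    have hx1 : x ∈ B \ A := by rw [h]; exact Finset.mem_univ x
    rw [Finset.mem_sdiff] at hx1
    exact hx1.2 hx.1
  have g1 := hconn (A ∩ B) hC1 hne1
  have g2 := hconn (A \ B) hC2 hne2
  have g3 := hconn (Finset.univ \ (A ∪ B)) hC3 hne3
  have g4 := hconn (B \ A) hC4 hne4
  rw [decomp1 fst snd J A B, ← hs12, ← hs41, ← hb] at g1
  rw [decomp2 fst snd J A B, ← hs12, ← hs23, ← ha] at g2
  rw [decomp3 fst snd J A B, ← hs23, ← hs34, ← hb] at g3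
  rw [decomp4 fst snd J A B, ← hs34, ← hs41, ← ha] at g4
  rw [decompA fst snd J A B, ← hs23, ← hs41, ← ha, ← hb] at hA
  rw [decompB fst snd J A B, ← hs12, ← hs34, ← ha, ← hb] at hB
  obtain ⟨k, hk⟩ := hlam
  exact stmt7_arith lam k s12 s23 s34 s41 a b hk hA hB g1 g2 g3 g4
end

section
/- Let H be a λ-edge-connected graph with λ even, and let F = { S ⊂ V : S nonempty proper, d(S) ∈ {λ, λ+1} }. Then F is uncrossable: for any A, B ∈ F, either A ∩ B and A ∪ B are both in F, or A \ B and B \ A are both in F (here A∪B ∈ F means d(A∪B) ∈ {λ,λ+1} and A∪B is a nonempty proper subset, etc.). -/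
open Finset

section Aux

variable {V ι : Type} [DecidableEq V] [DecidableEq ι]
variable (fst snd : ι → V) (J : Finset ι)

lemma cutCard_eq_sum (S : Finset V) :
    cutCard fst snd J S =
      ∑ e ∈ J, (if (fst e ∈ S ∧ snd e ∉ S) ∨ (snd e ∈ S ∧ fst e ∉ S) then 1 else 0) :=
  Finset.card_filter _ _

lemma btw_eq_sum (X Y : Finset V) :
    btw fst snd J X Y =
      ∑ e ∈ J, (if (fst e ∈ X ∧ snd e ∈ Y) ∨ (fst e ∈ Y ∧ snd e ∈ X) then 1 else 0) :=
  Finset.card_filter _ _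

lemma ident1 (A B : Finset V) :
    cutCard fst snd J A + cutCard fst snd J B
      = cutCard fst snd J (A ∩ B) + cutCard fst snd J (A ∪ B)
        + 2 * btw fst snd J (A \ B) (B \ A) := by
  simp only [cutCard_eq_sum, btw_eq_sum, Finset.mul_sum, ← Finset.sum_add_distrib]
  refine Finset.sum_congr rfl fun e _ => ?_
  by_cases h1 : fst e ∈ A <;> by_cases h2 : fst e ∈ B <;>
    by_cases h3 : snd e ∈ A <;> by_cases h4 : snd e ∈ B <;>
    simp [h1, h2, h3, h4]

lemma ident2 [Fintype V] (A B : Finset V) :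
    cutCard fst snd J A + cutCard fst snd J B
      = cutCard fst snd J (A \ B) + cutCard fst snd J (B \ A)
        + 2 * btw fst snd J (A ∩ B) (Finset.univ \ (A ∪ B)) := by
  simp only [cutCard_eq_sum, btw_eq_sum, Finset.mul_sum, ← Finset.sum_add_distrib]
  refine Finset.sum_congr rfl fun e _ => ?_
  by_cases h1 : fst e ∈ A <;> by_cases h2 : fst e ∈ B <;>
    by_cases h3 : snd e ∈ A <;> by_cases h4 : snd e ∈ B <;>
    simp [h1, h2, h3, h4]

lemma ident3 (A B : Finset V) :
    cutCard fst snd J (A ∩ B) + cutCard fst snd J (A \ B)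
      = cutCard fst snd J A + 2 * btw fst snd J (A ∩ B) (A \ B) := by
  simp only [cutCard_eq_sum, btw_eq_sum, Finset.mul_sum, ← Finset.sum_add_distrib]
  refine Finset.sum_congr rfl fun e _ => ?_
  by_cases h1 : fst e ∈ A <;> by_cases h2 : fst e ∈ B <;>
    by_cases h3 : snd e ∈ A <;> by_cases h4 : snd e ∈ B <;>
    simp [h1, h2, h3, h4]

lemma cutCard_compl [Fintype V] (S : Finset V) :
    cutCard fst snd J (Finset.univ \ S) = cutCard fst snd J S := by
  unfold cutCard
  congr 1
  apply Finset.filter_congr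
  intro e _
  simp [and_comm, or_comm]

end Aux

theorem stmt8 {V ι : Type} [Fintype V] [DecidableEq V] [DecidableEq ι]
    (fst snd : ι → V) (J : Finset ι) (lam : ℕ) (hlam : Even lam)
    (hconn : ∀ S : Finset V, S.Nonempty → S ≠ Finset.univ → lam ≤ cutCard fst snd J S)
    (F : Finset V → Prop)
    (hF : ∀ S, F S ↔ S.Nonempty ∧ S ≠ Finset.univ ∧
        (cutCard fst snd J S = lam ∨ cutCard fst snd J S = lam + 1)) :
    ∀ A B, F A → F B →
      (F (A ∩ B) ∧ F (A ∪ B)) ∨ (F (A \ B) ∧ F (B \ A)) := by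
  intro A B hA hB
  obtain ⟨hAne, hAnu, hAcut⟩ := (hF A).1 hA
  obtain ⟨hBne, hBnu, hBcut⟩ := (hF B).1 hB
  -- degenerate cases
  by_cases hAB : A ∩ B = ∅
  · right
    have h1 : A \ B = A := by
      rw [Finset.sdiff_eq_self_iff_disjoint, Finset.disjoint_iff_inter_eq_empty, hAB]
    have h2 : B \ A = B := by
      rw [Finset.sdiff_eq_self_iff_disjoint, Finset.disjoint_iff_inter_eq_empty,
        Finset.inter_comm, hAB]
    rw [h1, h2]; exact ⟨hA, hB⟩
  by_cases hUn : A ∪ B = Finset.univ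
  · right
    have h1 : A \ B = Finset.univ \ B := by
      ext x
      have hx : x ∈ A ∪ B := hUn ▸ Finset.mem_univ x
      simp only [Finset.mem_sdiff, Finset.mem_univ, true_and]
      simp only [Finset.mem_union] at hx
      tauto
    have h2 : B \ A = Finset.univ \ A := by
      ext x
      have hx : x ∈ A ∪ B := hUn ▸ Finset.mem_univ x
      simp only [Finset.mem_sdiff, Finset.mem_univ, true_and]
      simp only [Finset.mem_union] at hx
      tauto
    have hne1 : (Finset.univ \ B).Nonempty :=
      Finset.sdiff_nonempty.2 fun h => hBnu (Finset.univ_subset_iff.1 h)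
    have hne2 : (Finset.univ \ A).Nonempty :=
      Finset.sdiff_nonempty.2 fun h => hAnu (Finset.univ_subset_iff.1 h)
    have hnu1 : Finset.univ \ B ≠ Finset.univ := by
      intro h
      obtain ⟨x, hx⟩ := hBne
      have : x ∈ Finset.univ \ B := by rw [h]; exact Finset.mem_univ x
      exact (Finset.mem_sdiff.1 this).2 hx
    have hnu2 : Finset.univ \ A ≠ Finset.univ := by
      intro h
      obtain ⟨x, hx⟩ := hAne
      have : x ∈ Finset.univ \ A := by rw [h]; exact Finset.mem_univ x
      exact (Finset.mem_sdiff.1 this).2 hx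
    rw [h1, h2]
    exact ⟨(hF _).2 ⟨hne1, hnu1, (cutCard_compl fst snd J B).symm ▸ hBcut⟩,
           (hF _).2 ⟨hne2, hnu2, (cutCard_compl fst snd J A).symm ▸ hAcut⟩⟩
  by_cases hAsub : A \ B = ∅
  · left
    have hsub : A ⊆ B := by
      intro x hx; by_contra hxb
      exact Finset.notMem_empty x (hAsub ▸ Finset.mem_sdiff.2 ⟨hx, hxb⟩)
    have h1 : A ∩ B = A := Finset.inter_eq_left.2 hsub
    have h2 : A ∪ B = B := Finset.union_eq_right.2 hsub
    rw [h1, h2]; exact ⟨hA, hB⟩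
  by_cases hBsub : B \ A = ∅
  · left
    have hsub : B ⊆ A := by
      intro x hx; by_contra hxa
      exact Finset.notMem_empty x (hBsub ▸ Finset.mem_sdiff.2 ⟨hx, hxa⟩)
    have h1 : A ∩ B = B := Finset.inter_eq_right.2 hsub
    have h2 : A ∪ B = A := Finset.union_eq_left.2 hsub
    rw [h1, h2]; exact ⟨hB, hA⟩
  -- main case: all four sets nonempty and proper
  have hIne : (A ∩ B).Nonempty := Finset.nonempty_iff_ne_empty.2 hAB
  have hUne : (A ∪ B).Nonempty := hAne.mono Finset.subset_union_left
  have hDne : (A \ B).Nonempty := Finset.nonempty_iff_ne_empty.2 hAsub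
  have hEne : (B \ A).Nonempty := Finset.nonempty_iff_ne_empty.2 hBsub
  have hInu : A ∩ B ≠ Finset.univ := fun h => hAnu (Finset.univ_subset_iff.1 (h ▸ Finset.inter_subset_left))
  have hDnu : A \ B ≠ Finset.univ := by
    intro h
    obtain ⟨x, hx⟩ := hBne
    have : x ∈ A \ B := h ▸ Finset.mem_univ x
    exact (Finset.mem_sdiff.1 this).2 hx
  have hEnu : B \ A ≠ Finset.univ := by
    intro h
    obtain ⟨x, hx⟩ := hAne
    have : x ∈ B \ A := h ▸ Finset.mem_univ x
    exact (Finset.mem_sdiff.1 this).2 hx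
  have hp := hconn _ hIne hInu
  have hq := hconn _ hUne hUn
  have hr := hconn _ hDne hDnu
  have hs := hconn _ hEne hEnu
  have e1 := ident1 fst snd J A B
  have e2 := ident2 fst snd J A B
  have e3 := ident3 fst snd J A B
  obtain ⟨m, hm⟩ := hlam
  by_contra hcon
  push_neg at hcon
  obtain ⟨hL, hR⟩ := hcon
  have hL' : lam + 2 ≤ cutCard fst snd J (A ∩ B) ∨ lam + 2 ≤ cutCard fst snd J (A ∪ B) := by
    by_contra h
    push_neg at h
    exact (hL ((hF _).2 ⟨hIne, hInu, by omega⟩)) ((hF _).2 ⟨hUne, hUn, by omega⟩)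
  have hR' : lam + 2 ≤ cutCard fst snd J (A \ B) ∨ lam + 2 ≤ cutCard fst snd J (B \ A) := by
    by_contra h
    push_neg at h
    exact (hR ((hF _).2 ⟨hDne, hDnu, by omega⟩)) ((hF _).2 ⟨hEne, hEnu, by omega⟩)
  rcases hAcut with ha | ha <;> rcases hBcut with hb | hb <;>
    rcases hL' with hL' | hL' <;> rcases hR' with hR' | hR' <;> omega
end

section
/- Let F be a family of nonempty proper vertex subsets of a graph G, and let J ⊆ E(G) be an inclusion-minimal edge set covering F (i.e., every S ∈ F has some edge of J with exactly one endpoint in S, and no proper subset of J covers F). Then J is a forest (contains no cycle). -/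
/-- `J` covers the family `F`: every `S ∈ F` has an edge of `J` with exactly one
endpoint in `S`. -/
def Covers {V : Type} (F : Set (Set V)) (J : Set (Sym2 V)) : Prop :=
  ∀ S ∈ F, ∃ e ∈ J, ∃ u v : V, e = s(u, v) ∧ ((u ∈ S ∧ v ∉ S) ∨ (v ∈ S ∧ u ∉ S))

/-- A walk from inside `S` to outside `S` must use a crossing edge. -/
lemma cross_lemma {V : Type} {H : SimpleGraph V} {S : Set V} :
    ∀ {u v : V} (w : H.Walk u v), u ∈ S → v ∉ S →
      ∃ x y : V, s(x, y) ∈ w.edges ∧ x ∈ S ∧ y ∉ S := by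
  intro u v w
  induction w with
  | nil => intro h h'; exact absurd h h'
  | @cons a b c h w ih =>
    intro ha hc
    by_cases hb : b ∈ S
    · obtain ⟨x, y, hxy, hx, hy⟩ := ih hb hc
      exact ⟨x, y, by simp [hxy], hx, hy⟩
    · exact ⟨a, b, by simp, ha, hb⟩

theorem stmt9 {V : Type} (G : SimpleGraph V) (F : Set (Set V))
    (hF : ∀ S ∈ F, S.Nonempty ∧ S ≠ Set.univ)
    (J : Set (Sym2 V)) (hJ : J ⊆ G.edgeSet)
    (hcov : Covers F J)
    (hmin : ∀ J' : Set (Sym2 V), J' ⊂ J → ¬ Covers F J') :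
    (SimpleGraph.fromEdgeSet J).IsAcyclic := by
  set G' := SimpleGraph.fromEdgeSet J with hG'
  intro a p hp
  -- pick an edge of the cycle
  have hne : p.edges ≠ [] := by
    intro h
    have hlt := SimpleGraph.Walk.not_nil_iff_lt_length.mp hp.not_nil
    rw [← SimpleGraph.Walk.length_edges, h] at hlt
    simp at hlt
  obtain ⟨e, he⟩ := List.exists_mem_of_ne_nil _ hne
  induction e using Sym2.inductionOn with
  | hf u v =>
  have huv : G'.Adj u v := p.adj_of_mem_edges he
  have heJ : s(u, v) ∈ J := by
    rw [hG', SimpleGraph.fromEdgeSet_adj] at huv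
    exact huv.1
  -- reachability after deleting e
  have hreach : (G' \ SimpleGraph.fromEdgeSet {s(u, v)}).Reachable u v :=
    ((SimpleGraph.adj_and_reachable_delete_edges_iff_exists_cycle).mpr ⟨a, p, hp, he⟩).2
  obtain ⟨w⟩ := hreach
  -- minimality: J \ {e} fails to cover some S
  have hsub : J \ {s(u, v)} ⊂ J := by
    constructor
    · exact Set.diff_subset
    · intro habs
      exact (habs heJ).2 rfl
  have hnc := hmin _ hsub
  simp only [Covers, not_forall] at hnc
  obtain ⟨S, hS, hScov⟩ := hnc
  push_neg at hScov
  -- hcov gives a covering edge of S, which must be s(u,v)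
  obtain ⟨e₀, he₀J, x, y, hexy, hcross⟩ := hcov S hS
  have he₀ : e₀ = s(u, v) := by
    by_contra hne'
    have h2 := hScov e₀ ⟨he₀J, hne'⟩ x y hexy
    rcases hcross with ⟨h3, h4⟩ | ⟨h3, h4⟩
    · exact h4 (h2.1 h3)
    · exact h4 (h2.2 h3)
  -- so u,v straddle S (in some order)
  have hstraddle : (u ∈ S ∧ v ∉ S) ∨ (v ∈ S ∧ u ∉ S) := by
    rw [he₀, Sym2.eq_iff] at hexy
    rcases hexy with ⟨hx, hy⟩ | ⟨hx, hy⟩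
    · subst hx; subst hy
      exact hcross
    · subst hx; subst hy
      exact hcross.symm
  -- get a crossing edge on the walk w (possibly reversed)
  have hmain : ∃ x y : V, s(x, y) ∈ w.edges ∧ (x ∈ S ∧ y ∉ S) := by
    rcases hstraddle with ⟨hu, hv⟩ | ⟨hv, hu⟩
    · exact cross_lemma w hu hv
    · obtain ⟨x, y, hxy, hx, hy⟩ := cross_lemma w.reverse hv hu
      refine ⟨x, y, ?_, hx, hy⟩
      simpa [SimpleGraph.Walk.edges_reverse] using hxy
  obtain ⟨x', y', hxy', hx', hy'⟩ := hmain
  -- this edge is in J \ {s(u,v)} and covers S: contradiction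
  have hadj : (G' \ SimpleGraph.fromEdgeSet {s(u, v)}).Adj x' y' :=
    w.adj_of_mem_edges hxy'
  have h1 := hadj.1
  have h2 := hadj.2
  rw [hG', SimpleGraph.fromEdgeSet_adj] at h1
  have hne2 : s(x', y') ≠ s(u, v) := by
    intro habs
    exact h2 (by rw [SimpleGraph.fromEdgeSet_adj]; exact ⟨by simp [habs], h1.2⟩)
  have := hScov _ ⟨h1.1, hne2⟩ x' y' rfl
  exact hy' (this.1 hx')
end

section
/- Let H be a (k,q−1)-flex-connected graph with q ≥ 2, let A, B ∈ F_q(H) cross, with corner sets C1 = A∩B, C2 = A\B, C3 = V\(A∪B), C4 = B\A. If d_U(C1) = 0, then C2 ∈ F_q(H) and C4 ∈ F_q(H), i.e., d(C2) = d(C4) = k + q − 1 and d_U(C2), d_U(C4) ≥ q. -/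
open Finset

theorem stmt11 {V ι : Type} [Fintype V] [DecidableEq V] [DecidableEq ι]
    (fst snd : ι → V) (J U : Finset ι) (hU : U ⊆ J) (k q : ℕ) (hq : 2 ≤ q)
    (hflex : ∀ S : Finset V, S.Nonempty → S ≠ Finset.univ →
      k + min (cutCard fst snd U S) (q - 1) ≤ cutCard fst snd J S)
    (A B : Finset V)
    (hAne : A.Nonempty) (hAproper : A ≠ Finset.univ)
    (hBne : B.Nonempty) (hBproper : B ≠ Finset.univ)
    (hAd : cutCard fst snd J A = k + q - 1) (hAu : q ≤ cutCard fst snd U A)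
    (hBd : cutCard fst snd J B = k + q - 1) (hBu : q ≤ cutCard fst snd U B)
    (hC1 : (A ∩ B).Nonempty) (hC2 : (A \ B).Nonempty)
    (hC3 : (Finset.univ \ (A ∪ B)).Nonempty) (hC4 : (B \ A).Nonempty)
    (h0 : cutCard fst snd U (A ∩ B) = 0) :
    cutCard fst snd J (A \ B) = k + q - 1 ∧ cutCard fst snd J (B \ A) = k + q - 1 ∧
    q ≤ cutCard fst snd U (A \ B) ∧ q ≤ cutCard fst snd U (B \ A) := by
  classical
  -- cutCard as a sum
  have hsum : ∀ (E : Finset ι) (S : Finset V), cutCard fst snd E S =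
      ∑ e ∈ E, (if (fst e ∈ S ∧ snd e ∉ S) ∨ (snd e ∈ S ∧ fst e ∉ S) then 1 else 0) := by
    intro E S
    rw [cutCard, Finset.card_filter]
  -- unsafe cut of C2 is at least q
  have hUC2 : q ≤ cutCard fst snd U (A \ B) := by
    have h : cutCard fst snd U A ≤ cutCard fst snd U (A ∩ B) + cutCard fst snd U (A \ B) := by
      rw [hsum, hsum, hsum, ← Finset.sum_add_distrib]
      apply Finset.sum_le_sum
      intro e _
      by_cases hxA : fst e ∈ A <;> by_cases hyA : snd e ∈ A <;>
        by_cases hxB : fst e ∈ B <;> by_cases hyB : snd e ∈ B <;>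
        simp [hxA, hyA, hxB, hyB]
    omega
  have hUC4 : q ≤ cutCard fst snd U (B \ A) := by
    have h : cutCard fst snd U B ≤ cutCard fst snd U (A ∩ B) + cutCard fst snd U (B \ A) := by
      rw [hsum, hsum, hsum, ← Finset.sum_add_distrib]
      apply Finset.sum_le_sum
      intro e _
      by_cases hxA : fst e ∈ A <;> by_cases hyA : snd e ∈ A <;>
        by_cases hxB : fst e ∈ B <;> by_cases hyB : snd e ∈ B <;>
        simp [hxA, hyA, hxB, hyB]
    omega
  -- submodular-type inequality
  have hsub : cutCard fst snd J (A \ B) + cutCard fst snd J (B \ A) ≤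
      cutCard fst snd J A + cutCard fst snd J B := by
    rw [hsum, hsum, hsum, hsum, ← Finset.sum_add_distrib, ← Finset.sum_add_distrib]
    apply Finset.sum_le_sum
    intro e _
    by_cases hxA : fst e ∈ A <;> by_cases hyA : snd e ∈ A <;>
      by_cases hxB : fst e ∈ B <;> by_cases hyB : snd e ∈ B <;>
      simp [hxA, hyA, hxB, hyB]
  -- C2, C4 are proper
  obtain ⟨v, hv⟩ := hC3
  simp only [Finset.mem_sdiff, Finset.mem_univ, Finset.mem_union, true_and] at hv
  have hC2proper : A \ B ≠ Finset.univ := by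
    intro h
    have : v ∈ A \ B := h ▸ Finset.mem_univ v
    simp [Finset.mem_sdiff] at this
    tauto
  have hC4proper : B \ A ≠ Finset.univ := by
    intro h
    have : v ∈ B \ A := h ▸ Finset.mem_univ v
    simp [Finset.mem_sdiff] at this
    tauto
  have hf2 := hflex (A \ B) hC2 hC2proper
  have hf4 := hflex (B \ A) hC4 hC4proper
  have hmin2 : min (cutCard fst snd U (A \ B)) (q - 1) = q - 1 :=
    min_eq_right (by omega)
  have hmin4 : min (cutCard fst snd U (B \ A)) (q - 1) = q - 1 :=
    min_eq_right (by omega)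
  rw [hmin2] at hf2
  rw [hmin4] at hf4
  refine ⟨by omega, by omega, hUC2, hUC4⟩
end
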